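/- A metric δ on a finite set X of cardinality n ≥ 4 is circular decomposable (a nonnegatively weighted sum of split metrics of a circular split system, allowing trivial splits) if and only if some relabeling of X makes δ satisfy the Kalmanson conditions: max(δ(i,j)+δ(k,l), δ(i,l)+δ(j,k)) ≤ δ(i,k)+δ(j,l) for all 1 ≤ i < j < k < l ≤ n. -/

import Mathlib

/-- `A` is an arc of the circular ordering given by `σ`. -/
def IsArc {n : ℕ} (σ : Equiv.Perm (ZMod n)) (A : Finset (ZMod n)) : Prop :=
  ∃ (i : ZMod n) (l : ℕ), A = (Finset.range l).image fun k : ℕ => σ (i + (k : ZMod n))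

/-- The split metric of the split with block `A`. -/
def DeltaZ {n : ℕ} (A : Finset (ZMod n)) (p q : ZMod n) : ℝ :=
  if (p ∈ A ∧ q ∉ A) ∨ (p ∉ A ∧ q ∈ A) then 1 else 0

/-- `δ` is circular decomposable: a positively weighted sum of split metrics of a
circular split system (trivial splits allowed). -/
def CircularDecomposable {n : ℕ} [NeZero n] (δ : ZMod n → ZMod n → ℝ) : Prop :=
  ∃ (𝒞 : Finset (Finset (ZMod n))) (α : Finset (ZMod n) → ℝ)
    (σ : Equiv.Perm (ZMod n)),
    (∀ A ∈ 𝒞, A.Nonempty ∧ Aᶜ.Nonempty) ∧ (∀ A ∈ 𝒞, 0 < α A) ∧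
    (∀ A ∈ 𝒞, IsArc σ A ∨ IsArc σ Aᶜ) ∧
    ∀ p q, δ p q = ∑ A ∈ 𝒞, α A * DeltaZ A p q

/-- Some relabeling `ρ` of the points makes `δ` satisfy the Kalmanson conditions:
`max(δ(i,j)+δ(k,l), δ(i,l)+δ(j,k)) ≤ δ(i,k)+δ(j,l)` for all `i < j < k < l`. -/
def PermutedKalmanson {n : ℕ} (δ : ZMod n → ZMod n → ℝ) : Prop :=
  ∃ ρ : Equiv.Perm (ZMod n), ∀ i j k l : ZMod n,
    i.val < j.val → j.val < k.val → k.val < l.val →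
      δ (ρ i) (ρ j) + δ (ρ k) (ρ l) ≤ δ (ρ i) (ρ k) + δ (ρ j) (ρ l) ∧
      δ (ρ i) (ρ l) + δ (ρ j) (ρ k) ≤ δ (ρ i) (ρ k) + δ (ρ j) (ρ l)

/-! Forward direction: a cyclic arc of `σ` containing two opposite corners `i, k` of an
interleaved quadruple `i < j < k < l` also contains `j` or `l`, which is exactly what makes its
split metric Kalmanson in the `σ`-labelling; nonnegative combinations preserve this.

Backward direction: in the Kalmanson labelling give the arc `[a, b)` the weight
`w(a, b) = d(a-1, b-1) + d(a, b) - d(a-1, b) - d(a, b-1)`, a mixed second difference of `d`. It is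
nonnegative: by the triangle inequality when `[a, b)` or its complement is a single point, and
otherwise it is a Kalmanson inequality for the cyclically ordered points `a-1, a, b-1, b`. The arcs
containing `p` but not `q` are the `[a, b)` with `a ∈ (q, p]` and `b ∈ (p, q]`, so summing `w` over
them telescopes in both variables to `d(p, q) + d(q, p)`. Each split occurs twice, as `[a, b)` and
as `[b, a)`, hence `∑ w(a, b) δ_[a, b) = 4 d`. -/

open Finset

section Kalmanson

variable {α : Type*}

def KalmansonAt (d : α → α → ℝ) (i j k l : α) : Prop :=
  d i j + d k l ≤ d i k + d j l ∧ d i l + d j k ≤ d i k + d j l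

theorem KalmansonAt.rotate {d : α → α → ℝ} (hsymm : ∀ p q, d p q = d q p) {i j k l : α}
    (h : KalmansonAt d i j k l) : KalmansonAt d j k l i := by
  unfold KalmansonAt at *
  rw [hsymm l i, hsymm k i, hsymm j i]
  constructor <;> linarith [h.1, h.2]

theorem KalmansonAt.sum {ι : Type*} {s : Finset ι} {w : ι → ℝ} {f : ι → α → α → ℝ}
    {i j k l : α} (hw : ∀ x ∈ s, 0 ≤ w x) (hf : ∀ x ∈ s, KalmansonAt (f x) i j k l) :
    KalmansonAt (fun p q => ∑ x ∈ s, w x * f x p q) i j k l := by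
  simp only [KalmansonAt, ← sum_add_distrib, ← mul_add]
  exact ⟨sum_le_sum fun x hx => mul_le_mul_of_nonneg_left (hf x hx).1 (hw x hx),
    sum_le_sum fun x hx => mul_le_mul_of_nonneg_left (hf x hx).2 (hw x hx)⟩

end Kalmanson

section ZModArithmetic

variable {n : ℕ} [NeZero n]

theorem ZMod.val_sub_eq_ite (x y : ZMod n) :
    (x - y).val = if y.val ≤ x.val then x.val - y.val else x.val + n - y.val := by
  split_ifs with h
  · exact ZMod.val_sub h
  · have hyx : x.val ≤ y.val := by omega
    have hne : y - x ≠ 0 := by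
      intro h0
      rw [← ZMod.val_eq_zero, ZMod.val_sub hyx] at h0
      omega
    rw [← neg_sub, ZMod.neg_val, if_neg hne, ZMod.val_sub hyx]
    omega

theorem ZMod.val_natCast_sub_natCast {i j : ℕ} (hi : i < n) (hj : j < n) :
    ((j : ZMod n) - i).val = if i ≤ j then j - i else j + n - i := by
  rw [ZMod.val_sub_eq_ite, ZMod.val_natCast_of_lt hi, ZMod.val_natCast_of_lt hj]

theorem ZMod.sum_eq_sum_range_add {M : Type*} [AddCommMonoid M] (f : ZMod n → M) (o : ZMod n) :
    ∑ x, f x = ∑ i ∈ range n, f (o + i) := by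
  refine sum_nbij' (fun x => (x - o).val) (fun i => o + i) (fun x _ => mem_range.2 (x - o).val_lt)
    (fun _ _ => mem_univ _) (fun x _ => by simp) (fun i hi => ?_) (fun x _ => by simp)
  simp [ZMod.val_natCast_of_lt (mem_range.1 hi)]

theorem ZMod.val_add_natCast_cases (w : ZMod n) {k : ℕ} (hk : k < n) :
    w.val + k < n ∧ (w + k).val = w.val + k ∨ n ≤ w.val + k ∧ (w + k).val = w.val + k - n := by
  rcases lt_or_ge (w.val + k) n with h | h
  · exact .inl ⟨h, by rw [ZMod.val_add_of_lt (by rwa [ZMod.val_natCast_of_lt hk]),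
      ZMod.val_natCast_of_lt hk]⟩
  · exact .inr ⟨h, by rw [ZMod.val_add_of_le (by rwa [ZMod.val_natCast_of_lt hk]),
      ZMod.val_natCast_of_lt hk]⟩

end ZModArithmetic

section SplitMetric

variable {n : ℕ}

theorem deltaZ_compl [NeZero n] (A : Finset (ZMod n)) (p q : ZMod n) :
    DeltaZ Aᶜ p q = DeltaZ A p q := by
  unfold DeltaZ
  by_cases hp : p ∈ A <;> by_cases hq : q ∈ A <;> simp [hp, hq]

theorem deltaZ_image (σ : Equiv.Perm (ZMod n)) (B : Finset (ZMod n)) (p q : ZMod n) :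
    DeltaZ (B.image σ) p q = DeltaZ B (σ.symm p) (σ.symm q) := by
  have hmem : ∀ x, x ∈ B.image σ ↔ σ.symm x ∈ B := by
    simp [← Equiv.eq_symm_apply]
  simp only [DeltaZ, hmem]

theorem deltaZ_eq_add (A : Finset (ZMod n)) (p q : ZMod n) :
    DeltaZ A p q = (if p ∈ A ∧ q ∉ A then 1 else 0) + (if q ∈ A ∧ p ∉ A then 1 else 0) := by
  unfold DeltaZ
  by_cases hp : p ∈ A <;> by_cases hq : q ∈ A <;> simp [hp, hq]

theorem kalmansonAt_deltaZ {A : Finset (ZMod n)} {i j k l : ZMod n}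
    (hik : i ∈ A → k ∈ A → j ∈ A ∨ l ∈ A) (hjl : j ∈ A → l ∈ A → i ∈ A ∨ k ∈ A) :
    KalmansonAt (DeltaZ A) i j k l := by
  unfold KalmansonAt DeltaZ
  by_cases hi : i ∈ A <;> by_cases hj : j ∈ A <;> by_cases hk : k ∈ A <;> by_cases hl : l ∈ A <;>
    simp_all

end SplitMetric

section Arc

variable {n : ℕ}

def arc (s : ZMod n) (m : ℕ) : Finset (ZMod n) :=
  (range m).image fun k : ℕ => s + k

theorem IsArc.eq_image_arc {σ : Equiv.Perm (ZMod n)} {A : Finset (ZMod n)} (h : IsArc σ A) :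
    ∃ s m, A = (arc s m).image σ := by
  obtain ⟨s, m, rfl⟩ := h
  exact ⟨s, m, by rw [arc, image_image]; rfl⟩

variable [NeZero n]

theorem mem_arc {s x : ZMod n} {m : ℕ} : x ∈ arc s m ↔ (x - s).val < m := by
  constructor
  · intro h
    obtain ⟨k, hk, rfl⟩ := mem_image.1 h
    rw [add_sub_cancel_left, ZMod.val_natCast]
    exact (Nat.mod_le _ _).trans_lt (mem_range.1 hk)
  · intro h
    exact mem_image.2 ⟨(x - s).val, mem_range.2 h, by simp⟩

theorem mem_arc_interleaved (s : ZMod n) (m : ℕ) {i j k l : ZMod n}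
    (hij : i.val < j.val) (hjk : j.val < k.val) (hkl : k.val < l.val) :
    (i ∈ arc s m → k ∈ arc s m → j ∈ arc s m ∨ l ∈ arc s m) ∧
      (j ∈ arc s m → l ∈ arc s m → i ∈ arc s m ∨ k ∈ arc s m) := by
  simp only [mem_arc, ZMod.val_sub_eq_ite]
  have := l.val_lt
  split_ifs <;> omega

theorem kalmansonAt_deltaZ_of_isArc {σ : Equiv.Perm (ZMod n)} {A : Finset (ZMod n)}
    (h : IsArc σ A ∨ IsArc σ Aᶜ) {i j k l : ZMod n}
    (hij : i.val < j.val) (hjk : j.val < k.val) (hkl : k.val < l.val) :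
    KalmansonAt (fun p q => DeltaZ A (σ p) (σ q)) i j k l := by
  obtain ⟨B, hB, hAB⟩ : ∃ B, IsArc σ B ∧ ∀ p q, DeltaZ A p q = DeltaZ B p q := by
    rcases h with h | h
    · exact ⟨A, h, fun _ _ => rfl⟩
    · exact ⟨Aᶜ, h, fun p q => (deltaZ_compl A p q).symm⟩
  obtain ⟨s, m, rfl⟩ := hB.eq_image_arc
  simp only [hAB, deltaZ_image, Equiv.symm_apply_apply]
  obtain ⟨hik, hjl⟩ := mem_arc_interleaved s m hij hjk hkl
  exact kalmansonAt_deltaZ hik hjl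

theorem CircularDecomposable.permutedKalmanson {δ : ZMod n → ZMod n → ℝ}
    (h : CircularDecomposable δ) : PermutedKalmanson δ := by
  obtain ⟨𝒞, α, σ, -, hpos, harc, hδ⟩ := h
  refine ⟨σ, fun i j k l hij hjk hkl => ?_⟩
  have := KalmansonAt.sum (fun A hA => (hpos A hA).le)
    fun A hA => kalmansonAt_deltaZ_of_isArc (harc A hA) hij hjk hkl
  simpa only [KalmansonAt, hδ] using this

theorem circularDecomposable_of_eq_sum {ι : Type*} {δ : ZMod n → ZMod n → ℝ} (I : Finset ι)
    (w : ι → ℝ) (B : ι → Finset (ZMod n)) (σ : Equiv.Perm (ZMod n)) (hw : ∀ x ∈ I, 0 ≤ w x)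
    (hB : ∀ x ∈ I, (B x).Nonempty ∧ (B x)ᶜ.Nonempty) (harc : ∀ x ∈ I, IsArc σ (B x))
    (hδ : ∀ p q, δ p q = ∑ x ∈ I, w x * DeltaZ (B x) p q) : CircularDecomposable δ := by
  set J := I.filter (fun x => 0 < w x)
  refine ⟨J.image B, fun A => ∑ x ∈ J with B x = A, w x, σ, ?_, ?_, ?_, fun p q => ?_⟩
  · simp only [forall_mem_image]
    exact fun x hx => hB x (mem_filter.1 hx).1
  · simp only [forall_mem_image]
    exact fun x hx => sum_pos (fun y hy => (mem_filter.1 (mem_filter.1 hy).1).2)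
      ⟨x, mem_filter.2 ⟨hx, rfl⟩⟩
  · simp only [forall_mem_image]
    exact fun x hx => .inl (harc x (mem_filter.1 hx).1)
  · have hJ : ∑ x ∈ J, w x * DeltaZ (B x) p q = ∑ x ∈ I, w x * DeltaZ (B x) p q :=
      sum_filter_of_ne fun x hx hne =>
        (hw x hx).lt_of_ne (Ne.symm (left_ne_zero_of_mul hne))
    rw [hδ, ← hJ, ← sum_fiberwise_of_maps_to (g := B) (t := J.image B)
      fun x hx => mem_image_of_mem B hx]
    refine sum_congr rfl fun A _ => ?_
    rw [sum_mul]
    exact sum_congr rfl fun x hx => by rw [(mem_filter.1 hx).2]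

end Arc

theorem sum_Ico_sum_Ico_mixed_sub (g : ℕ → ℕ → ℝ) {a b c e : ℕ} (hab : a ≤ b) (hce : c ≤ e) :
    ∑ i ∈ Ico a b, ∑ j ∈ Ico c e, (g (i + 1) (j + 1) - g i (j + 1) - g (i + 1) j + g i j) =
      g b e - g a e - g b c + g a c := by
  have inner : ∀ i, ∑ j ∈ Ico c e, (g (i + 1) (j + 1) - g i (j + 1) - g (i + 1) j + g i j) =
      (g (i + 1) e - g i e) - (g (i + 1) c - g i c) := by
    intro i
    rw [← sum_Ico_sub (fun j => g (i + 1) j - g i j) hce]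
    exact sum_congr rfl fun j _ => by ring
  simp only [inner, sum_sub_distrib, sum_Ico_sub (g · e) hab, sum_Ico_sub (g · c) hab]
  ring

section SplitWeight

variable {n : ℕ} [NeZero n]

def splitWeight (d : ZMod n → ZMod n → ℝ) (a b : ZMod n) : ℝ :=
  d (a - 1) (b - 1) + d a b - d (a - 1) b - d a (b - 1)

theorem mem_arc_and_not_mem_arc_iff {p q : ZMod n} {i j : ℕ} (hi : i < n) (hj : j < n) :
    (p ∈ arc (q + 1 + (i : ZMod n)) (q + 1 + (j : ZMod n) - (q + 1 + (i : ZMod n))).val ∧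
        q ∉ arc (q + 1 + (i : ZMod n)) (q + 1 + (j : ZMod n) - (q + 1 + (i : ZMod n))).val) ↔
      i ≤ (p - (q + 1)).val ∧ (p - (q + 1)).val < j := by
  -- counted from `q + 1`, the point `q` has coordinate `n - 1`
  have hp : p - (q + 1 + (i : ZMod n)) = ((p - (q + 1)).val : ZMod n) - i := by
    rw [ZMod.natCast_zmod_val]; ring
  have hq : q - (q + 1 + (i : ZMod n)) = ((n - 1 : ℕ) : ZMod n) - i := by
    rw [Nat.cast_pred (NeZero.pos n), ZMod.natCast_self]; ring
  have hb : q + 1 + (j : ZMod n) - (q + 1 + (i : ZMod n)) = (j : ZMod n) - i := by ring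
  have hpn := (p - (q + 1)).val_lt
  have hqn : n - 1 < n := Nat.sub_one_lt (NeZero.ne n)
  simp only [mem_arc, hp, hq, hb, ZMod.val_natCast_sub_natCast hi hj,
    ZMod.val_natCast_sub_natCast hi hpn, ZMod.val_natCast_sub_natCast hi hqn]
  split_ifs <;> omega

theorem sum_splitWeight_mul_indicator (d : ZMod n → ZMod n → ℝ) (p q : ZMod n) :
    ∑ a, ∑ b, splitWeight d a b *
        (if p ∈ arc a (b - a).val ∧ q ∉ arc a (b - a).val then 1 else 0) =
      d p q + d q p - d p p - d q q := by
  set o := q + 1 with ho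
  set P := (p - o).val with hP
  have hPn : P < n := ZMod.val_lt _
  set g : ℕ → ℕ → ℝ := fun i j => d (o + i - 1) (o + j - 1) with hg
  have hW (i j : ℕ) : splitWeight d (o + (i : ZMod n)) (o + (j : ZMod n)) =
      g (i + 1) (j + 1) - g i (j + 1) - g (i + 1) j + g i j := by
    have succ_sub_one (k : ℕ) : o + ((k + 1 : ℕ) : ZMod n) - 1 = o + (k : ZMod n) := by
      push_cast; ring
    simp only [splitWeight, hg, succ_sub_one]
    ring
  calc _ = ∑ i ∈ range n, ∑ j ∈ range n, splitWeight d (o + (i : ZMod n)) (o + (j : ZMod n)) *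
        (if p ∈ arc (o + (i : ZMod n)) (o + (j : ZMod n) - (o + (i : ZMod n))).val ∧
            q ∉ arc (o + (i : ZMod n)) (o + (j : ZMod n) - (o + (i : ZMod n))).val
          then 1 else 0) := by
        rw [ZMod.sum_eq_sum_range_add _ o]
        exact sum_congr rfl fun i _ => ZMod.sum_eq_sum_range_add _ o
    _ = ∑ i ∈ range n, ∑ j ∈ range n, if i ≤ P ∧ P < j then
          g (i + 1) (j + 1) - g i (j + 1) - g (i + 1) j + g i j else 0 := by
        refine sum_congr rfl fun i hi => sum_congr rfl fun j hj => ?_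
        simp only [hW, mul_ite, mul_one, mul_zero]
        exact if_congr (mem_arc_and_not_mem_arc_iff (mem_range.1 hi) (mem_range.1 hj)) rfl rfl
    _ = ∑ i ∈ Ico 0 (P + 1), ∑ j ∈ Ico (P + 1) n,
          (g (i + 1) (j + 1) - g i (j + 1) - g (i + 1) j + g i j) := by
        rw [← sum_product', ← sum_product', ← sum_filter]
        congr 1
        ext x
        simp only [mem_filter, mem_product, mem_range, mem_Ico]
        omega
    _ = g (P + 1) n - g 0 n - g (P + 1) (P + 1) + g 0 (P + 1) :=
        sum_Ico_sum_Ico_mixed_sub g (Nat.zero_le _) hPn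
    _ = d p q + d q p - d p p - d q q := by
        have hp : o + ((P + 1 : ℕ) : ZMod n) - 1 = p := by
          rw [hP]; push_cast; rw [ZMod.natCast_zmod_val]; ring
        have hq₀ : o + ((0 : ℕ) : ZMod n) - 1 = q := by rw [ho]; push_cast; ring
        have hqn : o + (n : ZMod n) - 1 = q := by rw [ho, ZMod.natCast_self]; ring
        simp only [hg, hp, hq₀, hqn]
        ring

theorem sum_splitWeight_mul_deltaZ {d : ZMod n → ZMod n → ℝ} (hsymm : ∀ p q, d p q = d q p)
    (hdiag : ∀ p, d p p = 0) (p q : ZMod n) :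
    ∑ x ∈ univ.offDiag, splitWeight d x.1 x.2 * DeltaZ (arc x.1 (x.2 - x.1).val) p q =
      4 * d p q := by
  rw [sum_subset (subset_univ _) fun x _ hx => ?_, Fintype.sum_prod_type]
  · simp only [deltaZ_eq_add, mul_add, sum_add_distrib, sum_splitWeight_mul_indicator, hsymm q p,
      hdiag]
    ring
  · obtain ⟨a, b⟩ := x
    obtain rfl : a = b := by simpa using hx
    simp [arc, DeltaZ]

theorem kalmansonAt_add_of_lt {d : ZMod n → ZMod n → ℝ} (hsymm : ∀ p q, d p q = d q p)
    (K : ∀ i j k l : ZMod n, i.val < j.val → j.val < k.val → k.val < l.val → KalmansonAt d i j k l)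
    (w : ZMod n) {r s u : ℕ} (hr : 0 < r) (hrs : r < s) (hsu : s < u) (hu : u < n) :
    KalmansonAt d w (w + r) (w + s) (w + u) := by
  -- one of the four rotations of `(w, w + r, w + s, w + u)` is increasing in `val`
  have := w.val_lt
  have := w.val_add_natCast_cases (k := r) (by omega)
  have := w.val_add_natCast_cases (k := s) (by omega)
  have := w.val_add_natCast_cases hu
  by_cases hwu : w.val + u < n
  · exact K _ _ _ _ (by omega) (by omega) (by omega)
  by_cases hws : w.val + s < n
  · exact (K _ _ _ _ (by omega) (by omega) (by omega)).rotate hsymm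
  by_cases hwr : w.val + r < n
  · exact ((K _ _ _ _ (by omega) (by omega) (by omega)).rotate hsymm).rotate hsymm
  · exact (((K _ _ _ _ (by omega) (by omega) (by omega)).rotate hsymm).rotate hsymm).rotate hsymm

theorem splitWeight_nonneg {d : ZMod n → ZMod n → ℝ} (hsymm : ∀ p q, d p q = d q p)
    (hdiag : ∀ p, d p p = 0) (htri : ∀ p q r, d p r ≤ d p q + d q r)
    (K : ∀ i j k l : ZMod n, i.val < j.val → j.val < k.val → k.val < l.val → KalmansonAt d i j k l)
    {a b : ZMod n} (hab : a ≠ b) : 0 ≤ splitWeight d a b := by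
  set m := (b - a).val with hm
  have hb : b = a + (m : ZMod n) := by rw [hm, ZMod.natCast_zmod_val]; ring
  have hm0 : m ≠ 0 := fun h => hab (by rw [hb, h, Nat.cast_zero, add_zero])
  have hmn : m < n := ZMod.val_lt _
  unfold splitWeight
  rcases eq_or_ne m 1 with h1 | h1
  · rw [hb, h1, Nat.cast_one, add_sub_cancel_right, hdiag]
    linarith [htri (a - 1) a (a + 1)]
  rcases eq_or_ne m (n - 1) with h2 | h2
  · have hb' : b = a - 1 := by
      rw [hb, h2, Nat.cast_pred (NeZero.pos n), ZMod.natCast_self]; ring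
    rw [hb', hdiag]
    linarith [htri a (a - 1) (a - 1 - 1), hsymm (a - 1) (a - 1 - 1)]
  · have h := (kalmansonAt_add_of_lt hsymm K (a - 1) (r := 1) (s := m) (u := m + 1)
      Nat.one_pos (by omega) (by omega) (by omega)).2
    have e1 : a - 1 + ((1 : ℕ) : ZMod n) = a := by push_cast; ring
    have e2 : a - 1 + (m : ZMod n) = b - 1 := by rw [hb]; ring
    have e3 : a - 1 + ((m + 1 : ℕ) : ZMod n) = b := by rw [hb]; push_cast; ring
    rw [e1, e2, e3] at h
    linarith

theorem PermutedKalmanson.circularDecomposable {δ : ZMod n → ZMod n → ℝ}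
    (hsymm : ∀ p q, δ p q = δ q p) (hdiag : ∀ p, δ p p = 0)
    (htri : ∀ p q r, δ p r ≤ δ p q + δ q r) (h : PermutedKalmanson δ) :
    CircularDecomposable δ := by
  obtain ⟨ρ, K⟩ := h
  set d : ZMod n → ZMod n → ℝ := fun i j => δ (ρ i) (ρ j)
  have dsymm : ∀ p q, d p q = d q p := fun p q => hsymm _ _
  refine circularDecomposable_of_eq_sum univ.offDiag (fun x => splitWeight d x.1 x.2 / 4)
    (fun x => (arc x.1 (x.2 - x.1).val).image ρ) ρ (fun x hx => ?_) (fun x hx => ?_)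
    (fun x _ => ⟨x.1, (x.2 - x.1).val, by rw [arc, image_image]; rfl⟩) (fun p q => ?_)
  · exact div_nonneg (splitWeight_nonneg dsymm (fun _ => hdiag _) (fun _ _ _ => htri _ _ _) K
      (mem_offDiag.1 hx).2.2) zero_le_four
  · have hne : x.1 ≠ x.2 := (mem_offDiag.1 hx).2.2
    refine ⟨⟨ρ x.1, mem_image_of_mem ρ (mem_arc.2 ?_)⟩, ⟨ρ x.2, ?_⟩⟩
    · rw [sub_self, ZMod.val_zero]
      exact ZMod.val_pos.2 (sub_ne_zero.2 hne.symm)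
    · rw [mem_compl, ρ.injective.mem_finset_image, mem_arc]
      exact lt_irrefl _
  · simp only [deltaZ_image, div_mul_eq_mul_div, ← sum_div,
      sum_splitWeight_mul_deltaZ dsymm (fun _ => hdiag _), d, Equiv.apply_symm_apply]
    ring

end SplitWeight

theorem stmt14_general (n : ℕ) [NeZero n] (δ : ZMod n → ZMod n → ℝ)
    (hsymm : ∀ p q, δ p q = δ q p) (hdiag : ∀ p, δ p p = 0)
    (htri : ∀ p q r, δ p r ≤ δ p q + δ q r) :
    CircularDecomposable δ ↔ PermutedKalmanson δ :=
  ⟨CircularDecomposable.permutedKalmanson, PermutedKalmanson.circularDecomposable hsymm hdiag htri⟩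

/-- A metric on a finite set of cardinality `n ≥ 4` is circular decomposable iff it
is a permuted Kalmanson matrix. -/
theorem stmt14 (n : ℕ) [NeZero n] (hn : 4 ≤ n) (δ : ZMod n → ZMod n → ℝ)
    (hsymm : ∀ p q, δ p q = δ q p) (hdiag : ∀ p, δ p p = 0)
    (htri : ∀ p q r, δ p r ≤ δ p q + δ q r) :
    CircularDecomposable δ ↔ PermutedKalmanson δ :=
  stmt14_general n δ hsymm hdiag htri
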